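/- Let N, q ≥ 1. For each i ∈ Fin q let a_i, b_i : Fin N → ℝ be positive functions. Let β be a q×q real symmetric positive semidefinite matrix, let Σ be an N×N real symmetric positive semidefinite matrix, set D k l = Σ k k + Σ l l − 2·Σ k l, and let F be a finite Borel measure on (0,∞). Define the (Nq)×(Nq) real matrix K, indexed by pairs (k,i) ∈ Fin N × Fin q, with entries K (k,i) (l,j) = β i j · ∫₀^∞ √(b_i k · b_j l) / √( (a_i k + a_j l)/2 + D k l · w ) dF(w). Then K is positive semidefinite. -/

import Mathlib

/-!
Write `D` for the variogram of `S` and `c p = a_i k / 2` for `p = (k, i)`. Then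
`K = β ⊙ (√b √bᵀ) ⊙ [∫ (c p + c p' + w D p p')^(-1/2) dF(w)]`, and `w D` is the variogram of the
positive semidefinite matrix `w S`, so by the Schur product theorem it suffices that the kernel
`(c p + c p' + D p p')^(-1/2)` is positive semidefinite for every positive semidefinite `S`.
The identity `x^(-1/2) = π^(-1/2) ∫₀^∞ t^(-1/2) e^(-x t) dt` reduces this to the kernels
`e^(-t (c p + c p' + D p p')) = u p u p' e^(2 t S p p')` with `u p = e^(-t (c p + S p p))`,
and the entrywise exponential of a positive semidefinite matrix is positive semidefinite, by
Schur's theorem applied to each term of its power series.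
-/

open MeasureTheory Real

theorem inv_sqrt_eq_integral {x : ℝ} (hx : 0 < x) :
    (√x)⁻¹ = (√π)⁻¹ * ∫ t in Set.Ioi (0 : ℝ), t ^ (-(1 / 2) : ℝ) * Real.exp (-(x * t)) := by
  have h := Real.integral_rpow_mul_exp_neg_mul_Ioi one_half_pos hx
  rw [show (1 / 2 - 1 : ℝ) = -(1 / 2) by norm_num, Real.Gamma_one_half_eq,
    ← Real.sqrt_eq_rpow, Real.sqrt_div' _ hx.le] at h
  rw [h, Real.sqrt_one]
  field_simp

theorem integrableOn_rpow_neg_one_half_mul_exp_neg_mul {x : ℝ} (hx : 0 < x) :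
    IntegrableOn (fun t : ℝ => t ^ (-(1 / 2) : ℝ) * Real.exp (-(x * t))) (Set.Ioi 0) := by
  simpa [Real.rpow_one, neg_mul] using
    integrableOn_rpow_mul_exp_neg_mul_rpow (s := -(1 / 2)) (by norm_num) one_pos hx

theorem integrableOn_inv_sqrt_add_mul {μ : Measure ℝ} [IsFiniteMeasure μ] {c v : ℝ} (hc : 0 < c)
    (hv : 0 ≤ v) : IntegrableOn (fun w => (√(c + w * v))⁻¹) (Set.Ioi 0) μ := by
  refine Integrable.of_bound (by fun_prop) (√c)⁻¹ ?_
  filter_upwards [ae_restrict_mem measurableSet_Ioi] with w (hw : 0 < w)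
  rw [Real.norm_of_nonneg (by positivity)]
  gcongr
  exact le_add_of_nonneg_right (mul_nonneg hw.le hv)

namespace Matrix

variable {ι : Type*}

theorem posSemidef_iff_isHermitian_and_sum_mul_mul_nonneg [Fintype ι] {A : Matrix ι ι ℝ} :
    A.PosSemidef ↔ A.IsHermitian ∧ ∀ x : ι → ℝ, 0 ≤ ∑ i, ∑ j, x i * x j * A i j := by
  rw [posSemidef_iff_dotProduct_mulVec]
  refine and_congr_right fun _ => forall_congr' fun x => ?_
  simp only [dotProduct, mulVec, star_trivial, Finset.mul_sum]
  exact Iff.of_eq <| congrArg _ <|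
    Finset.sum_congr rfl fun i _ => Finset.sum_congr rfl fun j _ => by ring

open scoped ComplexOrder in
theorem PosSemidef.map_pow [Fintype ι] {𝕜 : Type*} [RCLike 𝕜] {A : Matrix ι ι 𝕜}
    (hA : A.PosSemidef) (n : ℕ) :
    (A.map (· ^ n)).PosSemidef := by
  induction n with
  | zero =>
    convert posSemidef_vecMulVec_self_star (1 : ι → 𝕜) using 1
    ext; simp [vecMulVec]
  | succ n ih =>
    convert ih.hadamard hA using 1
    ext; simp [pow_succ]

theorem PosSemidef.map_exp [Fintype ι] {A : Matrix ι ι ℝ} (hA : A.PosSemidef) :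
    (A.map Real.exp).PosSemidef := by
  rw [posSemidef_iff_isHermitian_and_sum_mul_mul_nonneg]
  refine ⟨hA.isHermitian.map _ fun _ => rfl, fun x => ?_⟩
  have hsum : HasSum (fun n : ℕ => ∑ i, ∑ j, x i * x j * (A i j ^ n / n.factorial))
      (∑ i, ∑ j, x i * x j * Real.exp (A i j)) :=
    hasSum_sum fun i _ => hasSum_sum fun j _ => by
      simpa [Real.exp_eq_exp_ℝ] using
        (NormedSpace.expSeries_div_hasSum_exp (A i j)).mul_left (x i * x j)
  refine hsum.nonneg fun n => ?_
  have := posSemidef_iff_isHermitian_and_sum_mul_mul_nonneg.mp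
    ((hA.map_pow n).smul (a := ((n.factorial : ℝ)⁻¹)) (by positivity))
  simpa [div_eq_inv_mul, mul_left_comm] using this.2 x

theorem posSemidef_integral_of_ae [Fintype ι] {X : Type*} [MeasurableSpace X] {μ : Measure X}
    {f : X → Matrix ι ι ℝ} (hf : ∀ i j, Integrable (fun x => f x i j) μ)
    (hpos : ∀ᵐ x ∂μ, (f x).PosSemidef) :
    (of fun i j => ∫ x, f x i j ∂μ).PosSemidef := by
  rw [posSemidef_iff_isHermitian_and_sum_mul_mul_nonneg]
  constructor
  · refine IsHermitian.ext fun i j => integral_congr_ae ?_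
    filter_upwards [hpos] with x hx using hx.isHermitian.apply i j
  · intro y
    have hint : ∀ i j, Integrable (fun x => y i * y j * f x i j) μ :=
      fun i j => (hf i j).const_mul _
    simp only [of_apply, ← integral_const_mul]
    simp_rw [← integral_finsetSum _ fun j _ => hint _ j]
    rw [← integral_finsetSum _ fun i _ => integrable_finsetSum _ fun j _ => hint i j]
    refine integral_nonneg_of_ae ?_
    filter_upwards [hpos] with x hx
    exact (posSemidef_iff_isHermitian_and_sum_mul_mul_nonneg.mp hx).2 y

/-- `D k l` of the statement: `Var (A k - A l)` for a centred random vector `A` with covariance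
matrix `S`, i.e. the resistance distance when `S` comes from the auxiliary field. -/
def variogram (S : Matrix ι ι ℝ) (k l : ι) : ℝ := S k k + S l l - 2 * S k l

theorem variogram_smul (t : ℝ) (S : Matrix ι ι ℝ) (k l : ι) :
    variogram (t • S) k l = t * variogram S k l := by
  simp only [variogram, smul_apply, smul_eq_mul]; ring

theorem PosSemidef.variogram_nonneg [Fintype ι] {S : Matrix ι ι ℝ}
    (hS : S.PosSemidef) (k l : ι) : 0 ≤ variogram S k l := by
  classical
  have := (posSemidef_iff_isHermitian_and_sum_mul_mul_nonneg.mp hS).2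
    (Pi.single k 1 - Pi.single l 1)
  simp only [Pi.sub_apply, Pi.single_apply, mul_sub, mul_ite, mul_one, mul_zero, sub_mul, ite_mul,
    one_mul, zero_mul, Finset.sum_sub_distrib, Finset.sum_ite_eq', Finset.mem_univ, ↓reduceIte,
    sub_nonneg, tsub_le_iff_right] at this
  have hsym : S l k = S k l := by simpa using hS.isHermitian.apply k l
  simp only [variogram]; linarith

theorem PosSemidef.exp_neg_add_variogram [Fintype ι] {S : Matrix ι ι ℝ}
    (hS : S.PosSemidef) (c : ι → ℝ) :
    (of fun k l => Real.exp (-(c k + c l + variogram S k l))).PosSemidef := by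
  let u : ι → ℝ := fun k => Real.exp (-(c k + S k k))
  have h : of (fun k l => Real.exp (-(c k + c l + variogram S k l))) =
      vecMulVec u u ⊙ (2 • S).map Real.exp := by
    ext k l
    simp only [of_apply, hadamard_apply, vecMulVec_apply, map_apply, smul_apply, u, variogram,
      ← Real.exp_add]
    ring_nf
  rw [h]
  exact (posSemidef_vecMulVec_self_star u).hadamard (hS.smul zero_le_two).map_exp

theorem PosSemidef.inv_sqrt_add_variogram [Fintype ι] {S : Matrix ι ι ℝ}
    (hS : S.PosSemidef) {c : ι → ℝ} (hc : ∀ k, 0 < c k) :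
    (of fun k l => (√(c k + c l + variogram S k l))⁻¹).PosSemidef := by
  have hx : ∀ k l, 0 < c k + c l + variogram S k l := fun k l =>
    add_pos_of_pos_of_nonneg (add_pos (hc k) (hc l)) (hS.variogram_nonneg k l)
  let f : ℝ → Matrix ι ι ℝ := fun t => of fun k l =>
    (√π)⁻¹ * (t ^ (-(1 / 2) : ℝ) * Real.exp (-((c k + c l + variogram S k l) * t)))
  have hf : (of fun k l => (√(c k + c l + variogram S k l))⁻¹) =
      of fun k l => ∫ t in Set.Ioi 0, f t k l := by
    ext k l
    simp only [of_apply, f, integral_const_mul]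
    exact inv_sqrt_eq_integral (hx k l)
  rw [hf]
  refine posSemidef_integral_of_ae
    (fun k l => (integrableOn_rpow_neg_one_half_mul_exp_neg_mul (hx k l)).const_mul _) ?_
  filter_upwards [ae_restrict_mem measurableSet_Ioi] with t (ht : 0 < t)
  have hft : f t = ((√π)⁻¹ * t ^ (-(1 / 2) : ℝ)) •
      of fun k l => Real.exp (-(t * c k + t * c l + variogram (t • S) k l)) := by
    ext k l
    simp only [f, of_apply, smul_apply, smul_eq_mul, variogram_smul]
    ring_nf
  rw [hft]
  exact ((hS.smul ht.le).exp_neg_add_variogram _).smul (by positivity)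

theorem PosSemidef.integral_inv_sqrt_add_mul_variogram [Fintype ι]
    {S : Matrix ι ι ℝ} (hS : S.PosSemidef) {c : ι → ℝ} (hc : ∀ k, 0 < c k)
    (μ : Measure ℝ) [IsFiniteMeasure μ] :
    (of fun k l => ∫ w in Set.Ioi 0, (√(c k + c l + w * variogram S k l))⁻¹ ∂μ).PosSemidef := by
  refine posSemidef_integral_of_ae
    (f := fun w => of fun k l => (√(c k + c l + w * variogram S k l))⁻¹)
    (fun k l => integrableOn_inv_sqrt_add_mul (add_pos (hc k) (hc l)) (hS.variogram_nonneg k l)) ?_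
  filter_upwards [ae_restrict_mem measurableSet_Ioi] with w (hw : 0 < w)
  simpa only [variogram_smul] using (hS.smul hw.le).inv_sqrt_add_variogram hc

end Matrix

open Matrix

theorem stmt1_general (N q : ℕ)
    (a b : Fin q → Fin N → ℝ)
    (ha : ∀ i k, 0 < a i k) (hb : ∀ i k, 0 < b i k)
    (β : Matrix (Fin q) (Fin q) ℝ) (hβ : β.PosSemidef)
    (S : Matrix (Fin N) (Fin N) ℝ) (hS : S.PosSemidef)
    (F : Measure ℝ) [IsFiniteMeasure F]
    (K : Matrix (Fin N × Fin q) (Fin N × Fin q) ℝ)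
    (hK : ∀ k i l j, K (k, i) (l, j) = β i j *
      ∫ w in Set.Ioi (0 : ℝ),
        Real.sqrt (b i k * b j l) /
          Real.sqrt ((a i k + a j l) / 2 + (S k k + S l l - 2 * S k l) * w) ∂F) :
    ∀ r : Fin N × Fin q → ℝ, 0 ≤ ∑ p, ∑ p', r p * r p' * K p p' := by
  let S' : Matrix (Fin N × Fin q) (Fin N × Fin q) ℝ := S.submatrix Prod.fst Prod.fst
  let c : Fin N × Fin q → ℝ := fun p => a p.2 p.1 / 2
  let u : Fin N × Fin q → ℝ := fun p => √(b p.2 p.1)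
  have hK_eq : K = β.submatrix Prod.snd Prod.snd ⊙ vecMulVec u u ⊙
      of fun p p' => ∫ w in Set.Ioi 0, (√(c p + c p' + w * variogram S' p p'))⁻¹ ∂F := by
    ext ⟨k, i⟩ ⟨l, j⟩
    simp only [hK, hadamard_apply, submatrix_apply, vecMulVec_apply, of_apply, mul_assoc,
      ← integral_const_mul]
    congr 2 with w
    rw [Real.sqrt_mul (hb i k).le, div_eq_mul_inv]
    simp only [c, u, S', variogram, submatrix_apply]
    ring_nf
  have hK_psd : K.PosSemidef := hK_eq ▸ ((hβ.submatrix _).hadamard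
    (posSemidef_vecMulVec_self_star u)).hadamard
    ((hS.submatrix _).integral_inv_sqrt_add_mul_variogram (c := c)
      (fun p => half_pos (ha p.2 p.1)) F)
  exact (posSemidef_iff_isHermitian_and_sum_mul_mul_nonneg.mp hK_psd).2

/-- Finite-dimensional form of Theorem 2: the matrix-valued non-stationary covariance matrix,
indexed by pairs `(k, i) ∈ Fin N × Fin q`, built from positive functions `a i`, `b i`, a
positive semidefinite colocated-correlation matrix `β`, a positive semidefinite matrix `S`
(inducing resistance distances `D k l = S k k + S l l - 2 S k l`) and a finite Borel measure
`F` on `(0, ∞)`, is positive semidefinite (in the quadratic-form sense). -/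
theorem stmt1 (N q : ℕ) (hN : 1 ≤ N) (hq : 1 ≤ q)
    (a b : Fin q → Fin N → ℝ)
    (ha : ∀ i k, 0 < a i k) (hb : ∀ i k, 0 < b i k)
    (β : Matrix (Fin q) (Fin q) ℝ) (hβ : β.PosSemidef)
    (S : Matrix (Fin N) (Fin N) ℝ) (hS : S.PosSemidef)
    (F : Measure ℝ) [IsFiniteMeasure F]
    (K : Matrix (Fin N × Fin q) (Fin N × Fin q) ℝ)
    (hK : ∀ k i l j, K (k, i) (l, j) = β i j *
      ∫ w in Set.Ioi (0 : ℝ),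
        Real.sqrt (b i k * b j l) /
          Real.sqrt ((a i k + a j l) / 2 + (S k k + S l l - 2 * S k l) * w) ∂F) :
    ∀ r : Fin N × Fin q → ℝ, 0 ≤ ∑ p, ∑ p', r p * r p' * K p p' :=
  stmt1_general N q a b ha hb β hβ S hS F K hK
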